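/- Let X be a complex Banach space and let A, B : X → X be continuous linear operators. Then the Strang splitting error exp(h(A+B)) − exp((h/2)A) · exp(hB) · exp((h/2)A), as a function of h ∈ ℝ, is O(h³) in operator norm as h → 0; i.e. there exist constants C > 0 and δ > 0 such that ‖exp(h(A+B)) − exp((h/2)A) exp(hB) exp((h/2)A)‖ ≤ C |h|³ for all |h| ≤ δ. -/

import Mathlib

/-!
Up to `O(h³)` each exponential may be replaced by its quadratic Taylor polynomial
`T(x) = 1 + x + x²/2` (Taylor's formula for the analytic function `exp`). For these,
`T(x) T(y) = T(x + y) + ½⁅x, y⁆ + (cubic terms)`, so `exp x exp y = exp (x + y) + ½⁅x, y⁆ + O(h³)`.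
Applying this first to `(a, b)` and then to `(a + b, a)` expands `exp a exp b exp a` as
`exp (2a + b) + ½⁅a, b⁆ + ½⁅a + b, a⁆ + O(h³)`, and the symmetric arrangement makes the two
commutators cancel.
-/

open Asymptotics Filter Topology NormedSpace

theorem expTaylor_mul_expTaylor {𝕂 R : Type*} [Field 𝕂] [CharZero 𝕂] [Ring R] [Algebra 𝕂 R]
    (x y : R) :
    (1 + x + (2⁻¹ : 𝕂) • x ^ 2) * (1 + y + (2⁻¹ : 𝕂) • y ^ 2) =
      (1 + (x + y) + (2⁻¹ : 𝕂) • (x + y) ^ 2) + (2⁻¹ : 𝕂) • ⁅x, y⁆ +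
        ((2⁻¹ : 𝕂) • (x * x * y + x * y * y) + (4⁻¹ : 𝕂) • (x * x * y * y)) := by
  simp only [Ring.lie_def, sq, mul_add, add_mul, mul_one, one_mul, smul_mul_assoc, mul_smul_comm,
    smul_smul, smul_add, smul_sub, mul_assoc]
  match_scalars <;> norm_num

namespace Asymptotics

variable {α : Type*} {l : Filter α} {k : α → ℝ}

theorem IsBigO.mul_sub_mul {R : Type*} [SeminormedRing R] {f₁ f₂ g₁ g₂ : α → R}
    (h₁ : (fun t => f₁ t - g₁ t) =O[l] k) (h₂ : (fun t => f₂ t - g₂ t) =O[l] k)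
    (hf₂ : f₂ =O[l] fun _ => (1 : ℝ)) (hg₁ : g₁ =O[l] fun _ => (1 : ℝ)) :
    (fun t => f₁ t * f₂ t - g₁ t * g₂ t) =O[l] k := by
  have key : ∀ t, f₁ t * f₂ t - g₁ t * g₂ t = (f₁ t - g₁ t) * f₂ t + g₁ t * (f₂ t - g₂ t) :=
    fun t => by noncomm_ring
  have e₁ := h₁.mul hf₂
  have e₂ := hg₁.mul h₂
  simp only [mul_one, one_mul] at e₁ e₂
  simpa only [key] using e₁.add e₂

theorem IsBigO.smul_const {𝕜 E : Type*} [NormedField 𝕜] [SeminormedAddCommGroup E]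
    [NormedSpace 𝕜 E] {f : α → 𝕜} (hf : f =O[l] k) (c : E) :
    (fun t => f t • c) =O[l] k :=
  (IsBigO.of_bound ‖c‖ (Eventually.of_forall fun t => by rw [norm_smul, mul_comm])).trans hf

theorem IsBigO.exists_pos_bound_of_abs_le {E F : Type*} [Norm E] [SeminormedAddCommGroup F]
    {f : ℝ → E} {g : ℝ → F} (hf : f =O[𝓝 0] g) :
    ∃ C > 0, ∃ δ > 0, ∀ h : ℝ, |h| ≤ δ → ‖f h‖ ≤ C * ‖g h‖ := by
  obtain ⟨C, hC, hCw⟩ := hf.exists_pos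
  obtain ⟨ε, hε, hball⟩ := Metric.eventually_nhds_iff.1 hCw.bound
  refine ⟨C, hC, ε / 2, half_pos hε, fun h hh => hball ?_⟩
  rw [Real.dist_eq, sub_zero]
  linarith

end Asymptotics

section
variable {α 𝕂 𝔸 : Type*} [RCLike 𝕂] [NormedRing 𝔸] [NormedAlgebra 𝕂 𝔸]

theorem expSeries_partialSum_one (x : 𝔸) : (expSeries 𝕂 𝔸).partialSum 1 x = 1 := by
  simp [FormalMultilinearSeries.partialSum, expSeries_apply_eq]

theorem expSeries_partialSum_three (x : 𝔸) :
    (expSeries 𝕂 𝔸).partialSum 3 x = 1 + x + (2⁻¹ : 𝕂) • x ^ 2 := by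
  simp [FormalMultilinearSeries.partialSum, expSeries_apply_eq, Finset.sum_range_succ,
    Nat.factorial]

variable {l : Filter α} {k : α → ℝ}

theorem expTaylor_mul_expTaylor_sub_isBigO (hk : Tendsto k l (𝓝 0)) {x y : α → 𝔸}
    (hx : x =O[l] k) (hy : y =O[l] k) :
    (fun t => (1 + x t + (2⁻¹ : 𝕂) • x t ^ 2) * (1 + y t + (2⁻¹ : 𝕂) • y t ^ 2) -
        (1 + (x t + y t) + (2⁻¹ : 𝕂) • (x t + y t) ^ 2) - (2⁻¹ : 𝕂) • ⁅x t, y t⁆)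
      =O[l] fun t => k t ^ 3 := by
  have hxxy := (hx.mul hx).mul hy
  have hxyy := (hx.mul hy).mul hy
  have hxxyy := hxxy.mul (hy.trans (hk.isBigO_one ℝ))
  have h₃ : (fun t => x t * x t * y t + x t * y t * y t) =O[l] fun t => k t ^ 3 :=
    (hxxy.add hxyy).congr_right fun t => by ring
  have h₄ : (fun t => x t * x t * y t * y t) =O[l] fun t => k t ^ 3 :=
    hxxyy.congr_right fun t => by ring
  refine ((h₃.const_smul_left (2⁻¹ : 𝕂)).add (h₄.const_smul_left (4⁻¹ : 𝕂))).congr_left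
    fun t => ?_
  simp only [Pi.smul_apply, expTaylor_mul_expTaylor]
  abel

variable [CompleteSpace 𝔸]

theorem exp_sub_partialSum_isBigO (hk : Tendsto k l (𝓝 0)) {x : α → 𝔸} (hx : x =O[l] k)
    (n : ℕ) :
    (fun t => exp (x t) - (expSeries 𝕂 𝔸).partialSum n (x t)) =O[l] fun t => k t ^ n := by
  have htaylor := ((exp_hasFPowerSeriesAt_zero (𝕂 := 𝕂) (𝔸 := 𝔸)).isBigO_sub_partialSum_pow
    n).comp_tendsto (hx.trans_tendsto hk)
  simp only [Function.comp_def, zero_add] at htaylor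
  exact htaylor.trans (hx.norm_left.pow n)

theorem exp_mul_exp_sub_exp_add_sub_lie_isBigO (hk : Tendsto k l (𝓝 0)) {x y : α → 𝔸}
    (hx : x =O[l] k) (hy : y =O[l] k) :
    (fun t => exp (x t) * exp (y t) - exp (x t + y t) - (2⁻¹ : 𝕂) • ⁅x t, y t⁆)
      =O[l] fun t => k t ^ 3 := by
  have taylor {z : α → 𝔸} (hz : z =O[l] k) :
      (fun t => exp (z t) - (1 + z t + (2⁻¹ : 𝕂) • z t ^ 2)) =O[l] fun t => k t ^ 3 := by
    simpa only [expSeries_partialSum_three] using exp_sub_partialSum_isBigO (𝕂 := 𝕂) hk hz 3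
  have hx₀ : Tendsto x l (𝓝 0) := hx.trans_tendsto hk
  have hy₀ : Tendsto y l (𝓝 0) := hy.trans_tendsto hk
  have hexp_y : (fun t => exp (y t)) =O[l] fun _ => (1 : ℝ) :=
    ((exp_analytic (𝕂 := 𝕂) (0 : 𝔸)).continuousAt.tendsto.comp hy₀).isBigO_one ℝ
  have htaylor_x : (fun t => 1 + x t + (2⁻¹ : 𝕂) • x t ^ 2) =O[l] fun _ => (1 : ℝ) :=
    ((tendsto_const_nhds.add hx₀).add ((hx₀.pow 2).const_smul _)).isBigO_one ℝ
  have hprod := IsBigO.mul_sub_mul (taylor hx) (taylor hy) hexp_y htaylor_x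
  have hpoly := expTaylor_mul_expTaylor_sub_isBigO (𝕂 := 𝕂) hk hx hy
  refine ((hprod.sub (taylor (hx.add hy))).add hpoly).congr_left fun t => ?_
  abel

end

theorem exp_add_add_sub_exp_mul_exp_mul_exp_isBigO {α 𝔸 : Type*} [NormedRing 𝔸]
    [NormedAlgebra ℝ 𝔸] [CompleteSpace 𝔸] {l : Filter α} {k : α → ℝ} (hk : Tendsto k l (𝓝 0))
    {x y : α → 𝔸} (hx : x =O[l] k) (hy : y =O[l] k) :
    (fun t => exp (x t + y t + x t) - exp (x t) * exp (y t) * exp (x t))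
      =O[l] fun t => k t ^ 3 := by
  have hexp_x : (fun t => exp (x t)) =O[l] fun _ => (1 : ℝ) :=
    ((exp_analytic (𝕂 := ℝ) (0 : 𝔸)).continuousAt.tendsto.comp
      (hx.trans_tendsto hk)).isBigO_one ℝ
  have hE₁ := (exp_mul_exp_sub_exp_add_sub_lie_isBigO (𝕂 := ℝ) hk hx hy).mul hexp_x
  have hE₂ := exp_mul_exp_sub_exp_add_sub_lie_isBigO (𝕂 := ℝ) hk (hx.add hy) hx
  have hlie : (fun t => ⁅x t, y t⁆) =O[l] fun t => k t * k t :=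
    ((hx.mul hy).sub (hy.mul hx)).congr_left fun t => (Ring.lie_def _ _).symm
  have hexp_sub_one : (fun t => exp (x t) - 1) =O[l] k := by
    simpa only [expSeries_partialSum_one, pow_one] using
      exp_sub_partialSum_isBigO (𝕂 := ℝ) hk hx 1
  have hrest := (hlie.const_smul_left (2⁻¹ : ℝ)).mul hexp_sub_one
  -- With `E₁`, `E₂` the second-order errors of the pairs `(x, y)` and `(x + y, x)`, the Strang
  -- error is `-(E₁ exp x + E₂ + ½⁅x, y⁆ (exp x - 1))`, because `⁅x + y, x⁆ = -⁅x, y⁆`.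
  refine (((hE₁.congr_right fun t => mul_one _).add hE₂).add
    (hrest.congr_right fun t => by ring)).neg_left.congr_left fun t => ?_
  have hcomm : ⁅x t + y t, x t⁆ = -⁅x t, y t⁆ := by
    simp only [Ring.lie_def]; noncomm_ring
  simp only [Pi.smul_apply, hcomm, smul_neg, sub_mul, mul_sub, smul_mul_assoc, mul_one]
  abel

/-- The Strang (second-order Split-Step) splitting error is `O(h³)` in operator
norm: for continuous linear operators `A, B` on a complex Banach space there
exist `C > 0` and `δ > 0` such that
`‖exp(h(A+B)) − exp((h/2)A) exp(hB) exp((h/2)A)‖ ≤ C |h|³` whenever `|h| ≤ δ`. -/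
theorem strang_splitting_error_cubic
    {X : Type*} [NormedAddCommGroup X] [NormedSpace ℂ X] [CompleteSpace X]
    (A B : X →L[ℂ] X) :
    ∃ C : ℝ, 0 < C ∧ ∃ δ : ℝ, 0 < δ ∧ ∀ h : ℝ, |h| ≤ δ →
      ‖NormedSpace.exp (h • (A + B))
          - NormedSpace.exp ((h / 2) • A) * NormedSpace.exp (h • B)
              * NormedSpace.exp ((h / 2) • A)‖
        ≤ C * |h| ^ 3 := by
  have hA : (fun h : ℝ => (h / 2) • A) =O[𝓝 0] fun h => h :=
    ((isBigO_refl _ _).const_mul_left 2⁻¹).smul_const A |>.congr_left fun h => by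
      rw [div_eq_inv_mul]
  have hB : (fun h : ℝ => h • B) =O[𝓝 0] fun h => h := (isBigO_refl _ _).smul_const B
  obtain ⟨C, hC, δ, hδ, hbound⟩ :=
    (exp_add_add_sub_exp_mul_exp_mul_exp_isBigO tendsto_id hA hB).exists_pos_bound_of_abs_le
  refine ⟨C, hC, δ, hδ, fun h hh => ?_⟩
  have hsum : (h / 2) • A + h • B + (h / 2) • A = h • (A + B) := by module
  simpa only [hsum, id, norm_pow, Real.norm_eq_abs] using hbound h hh
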